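/- Define the correlation P(a|q) for the m-player Hypercube game by P(a|q) = 1/2^{2^{m-1}-1} if (a,q) is consistent with a global assignment K : {0,1}^m → {±1} symmetric under flipping the first coordinate and the first player's parity condition ∏_{x: x₁=q₁} a₁(x) = (-1)^{q₁} holds, and P(a|q) = 0 otherwise. Then for every question q ∈ {0,1}^m, ∑_a P(a|q) = 1. -/

import Mathlib

/-!
A consistent answer tuple is determined by the first player's answer `g` on its facet
`{x | x i₀ = q i₀}`: a flip-invariant global assignment must be `x ↦ g (update x i₀ (q i₀))`,
and this assignment is flip-invariant for every `g`. So the admissible tuples correspond to the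
`±1`-valued functions on a facet of `2 ^ (m - 1)` points with prescribed product. Flipping a
single value swaps the two possible products, hence exactly `2 ^ (2 ^ (m - 1) - 1)` functions
qualify, which is the reciprocal of the weight.
-/

open scoped Classical

open Finset Function

namespace HypercubeGame

def boolSign (b : Bool) : ℝ := if b then 1 else -1

lemma boolSign_not (b : Bool) : boolSign (!b) = -boolSign b := by
  cases b <;> simp [boolSign]

lemma prod_boolSign_eq_one_or_neg_one {α : Type*} (s : Finset α) (g : α → Bool) :
    ∏ y ∈ s, boolSign (g y) = 1 ∨ ∏ y ∈ s, boolSign (g y) = -1 := by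
  refine prod_induction _ (fun r => r = 1 ∨ r = -1) ?_ (Or.inl rfl) fun y _ => ?_
  · rintro r s (rfl | rfl) (rfl | rfl) <;> norm_num
  · cases g y <;> simp [boolSign]

lemma prod_boolSign_update_not {α : Type*} [Fintype α] [DecidableEq α] (g : α → Bool) (y₀ : α) :
    ∏ y, boolSign (update g y₀ (!g y₀) y) = -∏ y, boolSign (g y) := by
  rw [← mul_prod_erase univ _ (mem_univ y₀), ← mul_prod_erase univ (fun y => boolSign (g y))
    (mem_univ y₀), update_self, boolSign_not, neg_mul]
  congr 2
  exact prod_congr rfl fun y hy => by rw [update_of_ne (ne_of_mem_erase hy)]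

theorem card_prod_boolSign_eq {α : Type*} [Fintype α] [DecidableEq α] [Nonempty α] {c : ℝ}
    (hc : c = 1 ∨ c = -1) :
    Fintype.card {g : α → Bool // ∏ y, boolSign (g y) = c} = 2 ^ (Fintype.card α - 1) := by
  obtain ⟨y₀⟩ := ‹Nonempty α›
  let flipAt : (α → Bool) → (α → Bool) := fun g => update g y₀ (!g y₀)
  have flipAt_involutive : Involutive flipAt := fun g => by simp [flipAt]
  have hswap : Fintype.card {g : α → Bool // ∏ y, boolSign (g y) = c}
      = Fintype.card {g : α → Bool // ¬ ∏ y, boolSign (g y) = c} := by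
    refine Fintype.card_congr (flipAt_involutive.toPerm.subtypeEquiv fun g => ?_)
    simp only [Involutive.coe_toPerm, flipAt, prod_boolSign_update_not]
    rcases prod_boolSign_eq_one_or_neg_one univ g with h | h <;>
      rcases hc with rfl | rfl <;> norm_num [h]
  have hsplit := Fintype.card_subtype_compl (fun g : α → Bool => ∏ y, boolSign (g y) = c)
  rw [Fintype.card_fun, Fintype.card_bool] at hsplit
  obtain ⟨n, hn⟩ := Nat.exists_eq_add_of_lt (Fintype.card_pos (α := α))
  rw [hn, zero_add, pow_succ] at hsplit
  rw [hn, zero_add, Nat.add_sub_cancel]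
  omega

variable {ι : Type*} [DecidableEq ι]

lemma card_facet [Fintype ι] (i₀ : ι) (b : Bool) :
    Fintype.card {x : ι → Bool // x i₀ = b} = 2 ^ (Fintype.card ι - 1) := by
  rw [Fintype.card_subtype, ← Fintype.piFinset_univ]
  simpa using Fintype.card_filter_piFinset_const_eq_of_mem (univ : Finset Bool) i₀ (mem_univ b)

def FlipInvariant (i₀ : ι) (K : (ι → Bool) → Bool) : Prop :=
  ∀ x, K x = K (update x i₀ (!x i₀))

lemma FlipInvariant.apply_update {i₀ : ι} {K : (ι → Bool) → Bool} (hK : FlipInvariant i₀ K)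
    (x : ι → Bool) (b : Bool) : K (update x i₀ b) = K x := by
  rcases Bool.eq_or_eq_not b (x i₀) with rfl | rfl
  · rw [update_eq_self]
  · exact (hK x).symm

def facetExtend {i₀ : ι} {b : Bool} (g : {x : ι → Bool // x i₀ = b} → Bool) (x : ι → Bool) :
    Bool :=
  g ⟨update x i₀ b, update_self ..⟩

lemma facetExtend_of_mem {i₀ : ι} {b : Bool} (g : {x : ι → Bool // x i₀ = b} → Bool)
    (x : {x : ι → Bool // x i₀ = b}) : facetExtend g x = g x := by
  simp only [facetExtend, ← x.2, update_eq_self]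

lemma flipInvariant_facetExtend {i₀ : ι} {b : Bool} (g : {x : ι → Bool // x i₀ = b} → Bool) :
    FlipInvariant i₀ (facetExtend g) := fun x => by
  simp only [facetExtend, update_idem]

def consistentEquivFacet (i₀ : ι) (q : ι → Bool) :
    {a : ∀ i, {x : ι → Bool // x i = q i} → Bool //
        ∃ K, FlipInvariant i₀ K ∧ ∀ i x, a i x = K x.1} ≃
      ({x : ι → Bool // x i₀ = q i₀} → Bool) where
  toFun a := a.1 i₀
  invFun g := ⟨fun _ x => facetExtend g x, facetExtend g, flipInvariant_facetExtend g,
    fun _ _ => rfl⟩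
  left_inv := by
    rintro ⟨a, K, hK, ha⟩
    ext i x
    simp only [facetExtend, ha, hK.apply_update]
  right_inv g := funext (facetExtend_of_mem g)

theorem card_consistent_parity [Fintype ι] (i₀ : ι) (q : ι → Bool) {c : ℝ}
    (hc : c = 1 ∨ c = -1) :
    Nat.card {a : ∀ i, {x : ι → Bool // x i = q i} → Bool //
        (∃ K, FlipInvariant i₀ K ∧ ∀ i x, a i x = K x.1) ∧ ∏ x, boolSign (a i₀ x) = c} =
      2 ^ (2 ^ (Fintype.card ι - 1) - 1) := by
  have : Nonempty {x : ι → Bool // x i₀ = q i₀} := ⟨⟨q, rfl⟩⟩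
  rw [← card_facet i₀ (q i₀), ← card_prod_boolSign_eq hc, ← Nat.card_eq_fintype_card]
  exact Nat.card_congr ((Equiv.subtypeSubtypeEquivSubtypeInter _ _).symm.trans
    ((consistentEquivFacet i₀ q).subtypeEquiv fun _ => Iff.rfl))

end HypercubeGame

open HypercubeGame in
theorem stmt_18 (m : ℕ) (hm : 2 ≤ m) (q : Fin m → Bool) :
    (∑ a : (∀ i : Fin m, {x : Fin m → Bool // x i = q i} → Bool),
      if (∃ K : (Fin m → Bool) → Bool,
            -- K is symmetric under flipping the first coordinate
            (∀ x : Fin m → Bool,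
              K x = K (Function.update x ⟨0, by omega⟩ (!(x ⟨0, by omega⟩)))) ∧
            -- every player's answer is consistent with the global assignment K
            (∀ i : Fin m, ∀ x : {x : Fin m → Bool // x i = q i}, a i x = K x.val)) ∧
          -- the first player's parity condition: product over the facet x₁ = q₁
          (∏ x : {x : Fin m → Bool // x ⟨0, by omega⟩ = q ⟨0, by omega⟩},
              (if a ⟨0, by omega⟩ x then (1 : ℝ) else -1)) =
            (if q ⟨0, by omega⟩ then -1 else 1)
      then (1 : ℝ) / 2 ^ (2 ^ (m - 1) - 1) else 0) = 1 := by
  have hc : (if q ⟨0, by omega⟩ then (-1 : ℝ) else 1) = 1 ∨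
      (if q ⟨0, by omega⟩ then (-1 : ℝ) else 1) = -1 := by
    cases q ⟨0, by omega⟩ <;> simp
  -- `Nat.card` involves no `Fintype` instance, so unfolding the definitions in `hcard` is harmless.
  have hcard := card_consistent_parity ⟨0, by omega⟩ q hc
  simp only [FlipInvariant, boolSign, Fintype.card_fin] at hcard
  rw [sum_ite, sum_const_zero, add_zero, sum_const, nsmul_eq_mul, ← Fintype.card_subtype,
    ← Nat.card_eq_fintype_card, hcard, Nat.cast_pow, Nat.cast_ofNat,
    mul_one_div_cancel (by positivity)]
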